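/- arXiv:2501.02356 — 2 statements merged into one kernel-verified Lean document; each statement's English description precedes it below -/
import Mathlib

section
/- With the setup above, fix a feature a ∈ N and θ_i ∈ [0,1] for i ≠ a, and define the Bernoulli power index I(a;F) = ∑_{S ⊆ N\{a}} (∏_{i∈S} θ_i ∏_{i∉S∪{a}} (1−θ_i)) · (E[F|S∪{a}] − E[F|S]). Then I(a;F) = E_{P^{θ,1}}[F] − E_{P^{θ,0}}[F], where P^{θ,1} and P^{θ,0} are the product distributions with marginals θ_i·δ_i + (1−θ_i)·P_i for i ≠ a, and with marginal δ_a (i.e. the point mass at e_a) resp. P_a at coordinate a. -/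
open Finset

/-- `E[F|S]`: conditional expectation of `F` given that features in `S` take the
reference values `e`. -/
noncomputable def condExp {n : ℕ} {Ω : Fin n → Type*} [∀ i, Fintype (Ω i)]
    [∀ i, DecidableEq (Ω i)] (P : ∀ i, Ω i → ℝ) (e : ∀ i, Ω i)
    (F : (∀ i, Ω i) → ℝ) (S : Finset (Fin n)) : ℝ :=
  ∑ ω : ∀ i, Ω i, F ω * (∏ i ∈ S, if ω i = e i then (1 : ℝ) else 0) * ∏ i ∈ Sᶜ, P i (ω i)

/-- A Bernoulli power index equals the difference of two expected values under
product distributions. -/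
theorem bernoulli_index_as_difference {n : ℕ} {Ω : Fin n → Type*} [∀ i, Fintype (Ω i)]
    [∀ i, Nonempty (Ω i)] [∀ i, DecidableEq (Ω i)]
    (P : ∀ i, Ω i → ℝ) (hP0 : ∀ i x, 0 ≤ P i x) (hP1 : ∀ i, ∑ x, P i x = 1)
    (e : ∀ i, Ω i) (F : (∀ i, Ω i) → ℝ) (a : Fin n)
    (θ : Fin n → ℝ) (hθ : ∀ i, i ≠ a → θ i ∈ Set.Icc (0 : ℝ) 1) :
    ∑ S ∈ ({a}ᶜ : Finset (Fin n)).powerset,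
        ((∏ i ∈ S, θ i) * ∏ i ∈ ({a}ᶜ : Finset (Fin n)) \ S, (1 - θ i)) *
          (condExp P e F (insert a S) - condExp P e F S)
      = (∑ ω : ∀ i, Ω i, F ω * (if ω a = e a then (1 : ℝ) else 0) *
            ∏ i ∈ ({a}ᶜ : Finset (Fin n)),
              (θ i * (if ω i = e i then (1 : ℝ) else 0) + (1 - θ i) * P i (ω i)))
        - ∑ ω : ∀ i, Ω i, F ω * P a (ω a) *
            ∏ i ∈ ({a}ᶜ : Finset (Fin n)),
              (θ i * (if ω i = e i then (1 : ℝ) else 0) + (1 - θ i) * P i (ω i)) := by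
  classical
  have key : ∑ S ∈ ({a}ᶜ : Finset (Fin n)).powerset,
        ((∏ i ∈ S, θ i) * ∏ i ∈ ({a}ᶜ : Finset (Fin n)) \ S, (1 - θ i)) *
          (condExp P e F (insert a S) - condExp P e F S)
      = ∑ S ∈ ({a}ᶜ : Finset (Fin n)).powerset, ∑ ω : ∀ i, Ω i,
          F ω * ((if ω a = e a then (1 : ℝ) else 0) - P a (ω a)) *
          ((∏ i ∈ S, θ i * (if ω i = e i then (1 : ℝ) else 0)) *
           ∏ i ∈ ({a}ᶜ : Finset (Fin n)) \ S, (1 - θ i) * P i (ω i)) := by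
    refine Finset.sum_congr rfl fun S hS => ?_
    rw [Finset.mem_powerset] at hS
    have haS : a ∉ S := fun h => by simpa using hS h
    have h1 : (insert a S)ᶜ = ({a}ᶜ : Finset (Fin n)) \ S := by
      ext i
      simp only [Finset.mem_compl, Finset.mem_insert, Finset.mem_sdiff,
        Finset.mem_singleton]
      tauto
    have h2 : Sᶜ = insert a (({a}ᶜ : Finset (Fin n)) \ S) := by
      ext i
      by_cases hi : i = a
      · subst hi; simp [haS]
      · simp [hi]
    have h3 : a ∉ ({a}ᶜ : Finset (Fin n)) \ S := by simp
    unfold condExp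
    rw [h1, h2, mul_sub,
        Finset.mul_sum, Finset.mul_sum, ← Finset.sum_sub_distrib]
    simp only [Finset.prod_insert haS, Finset.prod_insert h3]
    refine Finset.sum_congr rfl fun ω _ => ?_
    rw [Finset.prod_mul_distrib, Finset.prod_mul_distrib]
    ring
  rw [key, Finset.sum_comm, ← Finset.sum_sub_distrib]
  refine Finset.sum_congr rfl fun ω _ => ?_
  rw [← Finset.mul_sum, ← Finset.prod_add]
  ring
end

section
/- The Banzhaf value of feature a, defined as I(a;F) = (1/2^{n−1}) ∑_{S ⊆ N\{a}} (E[F|S∪{a}] − E[F|S]), satisfies I(a;F) = E[F(Y^{1/2,1})] − E[F(Y^{1/2,0})], where Y^{1/2,1} has product distribution with marginal δ_a at a and (δ_i+P_i)/2 at each i ≠ a, and Y^{1/2,0} has product distribution with marginal P_a at a and (δ_i+P_i)/2 at each i ≠ a. -/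
open Finset

/-- The Banzhaf value equals a difference of two expected values under product
distributions with marginals `(δ_i + P_i)/2` away from `a`. -/
theorem banzhaf_as_difference {n : ℕ} {Ω : Fin n → Type*} [∀ i, Fintype (Ω i)]
    [∀ i, Nonempty (Ω i)] [∀ i, DecidableEq (Ω i)]
    (P : ∀ i, Ω i → ℝ) (hP0 : ∀ i x, 0 ≤ P i x) (hP1 : ∀ i, ∑ x, P i x = 1)
    (e : ∀ i, Ω i) (F : (∀ i, Ω i) → ℝ) (a : Fin n) :
    (1 / 2 ^ (n - 1) : ℝ) *
        ∑ S ∈ ({a}ᶜ : Finset (Fin n)).powerset,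
          (condExp P e F (insert a S) - condExp P e F S)
      = (∑ ω : ∀ i, Ω i, F ω * (if ω a = e a then (1 : ℝ) else 0) *
            ∏ i ∈ ({a}ᶜ : Finset (Fin n)),
              ((if ω i = e i then (1 : ℝ) else 0) + P i (ω i)) / 2)
        - ∑ ω : ∀ i, Ω i, F ω * P a (ω a) *
            ∏ i ∈ ({a}ᶜ : Finset (Fin n)),
              ((if ω i = e i then (1 : ℝ) else 0) + P i (ω i)) / 2 := by
  classical
  have hcard : ({a}ᶜ : Finset (Fin n)).card = n - 1 := by
    simp [card_compl]
  have key : ∀ S ∈ ({a}ᶜ : Finset (Fin n)).powerset,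
      condExp P e F (insert a S) - condExp P e F S
      = ∑ ω : ∀ i, Ω i, F ω * ((if ω a = e a then (1:ℝ) else 0) - P a (ω a)) *
          ((∏ i ∈ S, if ω i = e i then (1:ℝ) else 0) *
            ∏ i ∈ ({a}ᶜ : Finset (Fin n)) \ S, P i (ω i)) := by
    intro S hS
    rw [mem_powerset] at hS
    have haS : a ∉ S := fun h => by simpa using hS h
    have h1 : (insert a S)ᶜ = ({a}ᶜ : Finset (Fin n)) \ S := by
      ext i; simp [not_or, and_comm]
    have h2 : Sᶜ = insert a (({a}ᶜ : Finset (Fin n)) \ S) := by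
      ext i
      by_cases hi : i = a
      · subst hi; simp [haS]
      · simp [hi]
    unfold condExp
    rw [h1, h2, ← Finset.sum_sub_distrib]
    refine Finset.sum_congr rfl fun ω _ => ?_
    rw [Finset.prod_insert haS, Finset.prod_insert (by simp)]
    ring
  rw [Finset.sum_congr rfl key, Finset.sum_comm, Finset.mul_sum, ← Finset.sum_sub_distrib]
  refine Finset.sum_congr rfl fun ω _ => ?_
  rw [← Finset.mul_sum, ← Finset.prod_add]
  have hprod : ∏ i ∈ ({a}ᶜ : Finset (Fin n)),
      ((if ω i = e i then (1:ℝ) else 0) + P i (ω i)) / 2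
      = (∏ i ∈ ({a}ᶜ : Finset (Fin n)),
          ((if ω i = e i then (1:ℝ) else 0) + P i (ω i))) / 2 ^ (n - 1) := by
    rw [Finset.prod_div_distrib, Finset.prod_const, hcard]
  rw [hprod]
  ring
end
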